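/- Let S be a random walk with i.i.d. increments ε_i satisfying E[ε_0] = 0, Var(ε_0) = σ² > 0, and η₀ ≤ α_0 ≤ 1-η₀ a.s. (equivalently |ε_0| ≤ I := log((1-η₀)/η₀)). Suppose furthermore Q[ε_0 < -I/4] > 0. Let a = I/4, i ≥ 1, and define H_{ia,k} to be the k-th visit time of S to the interval [(i-1)a, i a), and V_0^- the first time S is negative. Then Q[H_{a,k} < V_0^-] ≤ Q[ε_0 ≥ 0] · (1 - Q[ε_0 < -I/4])^{k-1}. -/

import Mathlib

/-!
If `H_{k+2} < V₀⁻` and `H_{k+1} = n`, the walk is in `[lo, hi)` at time `n` and still nonnegative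
at time `n + 1`, so `ε_{n+1} ≥ -hi`. Both `H_{k+1}` and `V₀⁻` are stopping times of the natural
filtration of `ε`, so the event `{H_{k+1} = n < V₀⁻}` is independent of `ε_{n+1}`; summing over `n`
gives `Q[H_{k+2} < V₀⁻] ≤ Q[ε_0 ≥ -hi] · Q[H_{k+1} < V₀⁻]`. For the first visit, `H_1 ≥ 1` forces
`S_1 = ε_1 ≥ 0`.
-/

open MeasureTheory Finset ProbabilityTheory
open scoped ENNReal

noncomputable section

/-- Partial sums `S_m = Σ_{i=1}^m ε_i`. -/
def pSum {Ω : Type*} (ε : ℕ → Ω → ℝ) (m : ℕ) (ω : Ω) : ℝ :=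
  ∑ i ∈ Finset.Icc 1 m, ε i ω

/-- `H_{[lo,hi),k}`: time of the `k`-th visit of the partial-sum walk to `[lo, hi)`,
with `H_{·,0} = 0`. -/
def visitTime {Ω : Type*} (ε : ℕ → Ω → ℝ) (lo hi : ℝ) : ℕ → Ω → ℕ∞
  | 0, _ => 0
  | s + 1, ω =>
      sInf {t : ℕ∞ | ∃ m : ℕ,
        visitTime ε lo hi s ω < (m : ℕ∞) ∧ pSum ε m ω ∈ Set.Ico lo hi ∧ t = m}

/-- `V_0^- = inf {m ≥ 1 : S_m < 0}` as an extended natural. -/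
def Vneg {Ω : Type*} (ε : ℕ → Ω → ℝ) (ω : Ω) : ℕ∞ :=
  sInf {t : ℕ∞ | ∃ m : ℕ, 1 ≤ m ∧ pSum ε m ω < 0 ∧ t = m}

theorem ENat.sInf_le_coe_iff {s : Set ℕ∞} {n : ℕ} : sInf s ≤ n ↔ ∃ t ∈ s, t ≤ n := by
  refine ⟨fun h => ?_, fun ⟨t, ht, htn⟩ => (sInf_le ht).trans htn⟩
  rcases s.eq_empty_or_nonempty with rfl | hs
  · simp at h
  · exact ⟨_, csInf_mem hs, h⟩

theorem ENat.coe_mem_of_sInf_eq {s : Set ℕ∞} {n : ℕ} (h : sInf s = n) : (n : ℕ∞) ∈ s := by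
  rcases s.eq_empty_or_nonempty with rfl | hs
  · simp at h
  · exact h ▸ csInf_mem hs

theorem ENat.setOf_lt_eq_iUnion {Ω : Type*} (τ σ : Ω → ℕ∞) :
    {ω | τ ω < σ ω} = ⋃ n : ℕ, {ω | τ ω = n} ∩ {ω | (n : ℕ∞) < σ ω} := by
  ext ω
  simp only [Set.mem_ofPred_eq, Set.mem_iUnion, Set.mem_inter_iff]
  refine ⟨fun h => ?_, fun ⟨n, hn, hlt⟩ => hn ▸ hlt⟩
  obtain ⟨n, hn⟩ := ENat.ne_top_iff_exists.1 h.ne_top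
  exact ⟨n, hn.symm, hn ▸ h⟩

section Walk

variable {Ω : Type*} {ε : ℕ → Ω → ℝ} {lo hi : ℝ} {ω : Ω}

theorem pSum_succ (m : ℕ) : pSum ε (m + 1) ω = pSum ε m ω + ε (m + 1) ω :=
  Finset.sum_Icc_succ_top (Nat.le_add_left 1 m) _

theorem visitTime_succ_le_iff {k n : ℕ} :
    visitTime ε lo hi (k + 1) ω ≤ n ↔
      ∃ m ≤ n, visitTime ε lo hi k ω < m ∧ pSum ε m ω ∈ Set.Ico lo hi := by
  simp only [visitTime, ENat.sInf_le_coe_iff, Set.mem_ofPred_eq]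
  constructor
  · rintro ⟨_, ⟨m, h₁, h₂, rfl⟩, hmn⟩
    exact ⟨m, by exact_mod_cast hmn, h₁, h₂⟩
  · rintro ⟨m, hmn, h₁, h₂⟩
    exact ⟨m, ⟨m, h₁, h₂, rfl⟩, by exact_mod_cast hmn⟩

theorem visitTime_succ_eq_coe {k n : ℕ} (h : visitTime ε lo hi (k + 1) ω = n) :
    visitTime ε lo hi k ω < n ∧ pSum ε n ω ∈ Set.Ico lo hi := by
  rw [visitTime] at h
  obtain ⟨m, h₁, h₂, hm⟩ := ENat.coe_mem_of_sInf_eq h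
  rw [Nat.cast_inj] at hm
  exact hm ▸ ⟨h₁, h₂⟩

theorem visitTime_lt_visitTime_succ {k : ℕ} (h : visitTime ε lo hi (k + 1) ω ≠ ⊤) :
    visitTime ε lo hi k ω < visitTime ε lo hi (k + 1) ω := by
  obtain ⟨N, hN⟩ := ENat.ne_top_iff_exists.1 h
  exact hN ▸ (visitTime_succ_eq_coe hN.symm).1

theorem Vneg_le_iff {n : ℕ} : Vneg ε ω ≤ n ↔ ∃ m, 1 ≤ m ∧ m ≤ n ∧ pSum ε m ω < 0 := by
  simp only [Vneg, ENat.sInf_le_coe_iff, Set.mem_ofPred_eq]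
  constructor
  · rintro ⟨_, ⟨m, h₁, h₂, rfl⟩, hmn⟩
    exact ⟨m, h₁, by exact_mod_cast hmn, h₂⟩
  · rintro ⟨m, h₁, hmn, h₂⟩
    exact ⟨m, ⟨m, h₁, h₂, rfl⟩, by exact_mod_cast hmn⟩

theorem pSum_nonneg_of_lt_Vneg {m : ℕ} (hm : 1 ≤ m) (h : (m : ℕ∞) < Vneg ε ω) :
    0 ≤ pSum ε m ω := by
  by_contra! hneg
  exact h.not_ge (Vneg_le_iff.2 ⟨m, hm, le_rfl, hneg⟩)

theorem eps_one_nonneg_of_visitTime_one_lt_Vneg (h : visitTime ε lo hi 1 ω < Vneg ε ω) :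
    0 ≤ ε 1 ω := by
  obtain ⟨N, hN⟩ := ENat.ne_top_iff_exists.1 h.ne_top
  have hN₁ : 1 ≤ N := by
    have : (0 : ℕ∞) < N := (visitTime_succ_eq_coe hN.symm).1
    exact_mod_cast this
  simpa [pSum] using
    pSum_nonneg_of_lt_Vneg le_rfl (lt_of_le_of_lt (by exact_mod_cast hN₁) (hN ▸ h))

theorem neg_le_eps_of_visitTime_lt_Vneg {k n : ℕ} (hn : visitTime ε lo hi (k + 1) ω = n)
    (h : visitTime ε lo hi (k + 2) ω < Vneg ε ω) : -hi ≤ ε (n + 1) ω := by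
  have hlt : (n : ℕ∞) < visitTime ε lo hi (k + 2) ω := hn ▸ visitTime_lt_visitTime_succ h.ne_top
  have hS : 0 ≤ pSum ε (n + 1) ω := pSum_nonneg_of_lt_Vneg (Nat.le_add_left 1 n)
    (lt_of_le_of_lt (by exact_mod_cast Order.add_one_le_of_lt hlt) h)
  have := (visitTime_succ_eq_coe hn).2.2
  rw [pSum_succ] at hS
  linarith

end Walk

section StoppingTime

variable {Ω : Type*} {mΩ : MeasurableSpace Ω} {F : Filtration ℕ mΩ} {ε : ℕ → Ω → ℝ}

theorem isStoppingTime_visitTime (hε : Adapted F (pSum ε)) (lo hi : ℝ) (k : ℕ) :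
    IsStoppingTime F (visitTime ε lo hi k) := by
  induction k with
  | zero => exact isStoppingTime_const F 0
  | succ k ih =>
    intro n
    have : {ω | visitTime ε lo hi (k + 1) ω ≤ (n : ℕ∞)} =
        ⋃ m ∈ Set.Iic n, {ω | visitTime ε lo hi k ω < m} ∩ pSum ε m ⁻¹' Set.Ico lo hi := by
      ext ω
      simp only [Set.mem_ofPred_eq, visitTime_succ_le_iff, Set.mem_iUnion, Set.mem_inter_iff,
        Set.mem_preimage, Set.mem_Iic, exists_prop]
    show MeasurableSet[F n] {ω | visitTime ε lo hi (k + 1) ω ≤ (n : ℕ∞)}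
    rw [this]
    exact .biUnion (Set.to_countable _) fun m hm =>
      F.mono hm _ ((ih.measurableSet_lt m).inter (hε m measurableSet_Ico))

theorem isStoppingTime_Vneg (hε : Adapted F (pSum ε)) : IsStoppingTime F (Vneg ε) := by
  intro n
  have : {ω | Vneg ε ω ≤ (n : ℕ∞)} = ⋃ m ∈ Set.Icc 1 n, pSum ε m ⁻¹' Set.Iio 0 := by
    ext ω
    simp only [Set.mem_ofPred_eq, Vneg_le_iff, Set.mem_iUnion, Set.mem_preimage, Set.mem_Icc,
      Set.mem_Iio, exists_prop, and_assoc]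
  show MeasurableSet[F n] {ω | Vneg ε ω ≤ (n : ℕ∞)}
  rw [this]
  exact .biUnion (Set.to_countable _) fun m hm => F.mono hm.2 _ (hε m measurableSet_Iio)

end StoppingTime

section Probability

variable {Ω : Type*} {mΩ : MeasurableSpace Ω} {Q : Measure Ω} {ε : ℕ → Ω → ℝ} {lo hi : ℝ}

theorem adapted_pSum_natural (hmeas : ∀ i, Measurable (ε i)) :
    Adapted (Filtration.natural ε fun i => (hmeas i).stronglyMeasurable) (pSum ε) := fun _ =>
  Finset.measurable_sum _ fun i hi =>
    ((Filtration.stronglyAdapted_natural (u := ε) _ i).measurable).mono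
      (Filtration.mono _ (Finset.mem_Icc.1 hi).2) le_rfl

theorem measure_visitTime_one_lt_Vneg_le (hid : ∀ i, IdentDistrib (ε i) (ε 0) Q Q) :
    Q {ω | visitTime ε lo hi 1 ω < Vneg ε ω} ≤ Q {ω | 0 ≤ ε 0 ω} :=
  calc Q {ω | visitTime ε lo hi 1 ω < Vneg ε ω} ≤ Q (ε 1 ⁻¹' Set.Ici 0) :=
        measure_mono fun _ => eps_one_nonneg_of_visitTime_one_lt_Vneg
    _ = Q {ω | 0 ≤ ε 0 ω} := (hid 1).measure_mem_eq measurableSet_Ici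

theorem measure_visitTime_succ_succ_lt_Vneg_le (hmeas : ∀ i, Measurable (ε i))
    (hindep : iIndepFun ε Q) (hid : ∀ i, IdentDistrib (ε i) (ε 0) Q Q) (k : ℕ) :
    Q {ω | visitTime ε lo hi (k + 2) ω < Vneg ε ω}
      ≤ Q {ω | -hi ≤ ε 0 ω} * Q {ω | visitTime ε lo hi (k + 1) ω < Vneg ε ω} := by
  have hsm : ∀ i, StronglyMeasurable (ε i) := fun i => (hmeas i).stronglyMeasurable
  set E : ℕ → Set Ω := fun n => {ω | visitTime ε lo hi (k + 1) ω = n} ∩ {ω | (n : ℕ∞) < Vneg ε ω}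
  have hE : ∀ n, MeasurableSet[Filtration.natural ε hsm n] (E n) := fun n =>
    ((isStoppingTime_visitTime (adapted_pSum_natural hmeas) lo hi (k + 1)).measurableSet_eq n).inter
      ((isStoppingTime_Vneg (adapted_pSum_natural hmeas)).measurableSet_gt n)
  have hdisj : Pairwise (Function.onFun Disjoint E) := fun n m hnm =>
    Set.disjoint_left.2 fun ω hn hm => hnm (by exact_mod_cast hn.1.symm.trans hm.1)
  have hsub : {ω | visitTime ε lo hi (k + 2) ω < Vneg ε ω} ⊆
      ⋃ n, E n ∩ ε (n + 1) ⁻¹' Set.Ici (-hi) := by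
    intro ω h
    have hlt : visitTime ε lo hi (k + 1) ω < Vneg ε ω :=
      (visitTime_lt_visitTime_succ h.ne_top).trans h
    obtain ⟨n, hn, hnV⟩ := Set.mem_iUnion.1 ((ENat.setOf_lt_eq_iUnion _ _).subset hlt)
    exact Set.mem_iUnion.2 ⟨n, ⟨hn, hnV⟩, neg_le_eps_of_visitTime_lt_Vneg hn h⟩
  have hindep_step : ∀ n, Q (E n ∩ ε (n + 1) ⁻¹' Set.Ici (-hi)) = Q (E n) * Q {ω | -hi ≤ ε 0 ω} := by
    intro n
    change _ = Q (E n) * Q (ε 0 ⁻¹' Set.Ici (-hi))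
    rw [← (hid (n + 1)).measure_mem_eq measurableSet_Ici, Set.inter_comm, mul_comm]
    exact (Indep_iff _ _ Q).1 (hindep.indep_comap_natural_of_lt hsm (Nat.lt_succ_self n)) _ _
      ⟨_, measurableSet_Ici, rfl⟩ (hE n)
  calc Q {ω | visitTime ε lo hi (k + 2) ω < Vneg ε ω}
      ≤ ∑' n, Q (E n ∩ ε (n + 1) ⁻¹' Set.Ici (-hi)) := (measure_mono hsub).trans (measure_iUnion_le _)
    _ = (∑' n, Q (E n)) * Q {ω | -hi ≤ ε 0 ω} := by
      simp only [hindep_step, ENNReal.tsum_mul_right]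
    _ = Q {ω | -hi ≤ ε 0 ω} * Q {ω | visitTime ε lo hi (k + 1) ω < Vneg ε ω} := by
      rw [ENat.setOf_lt_eq_iUnion, measure_iUnion hdisj fun n => Filtration.le _ n _ (hE n),
        mul_comm]

theorem measure_visitTime_lt_Vneg_le (hmeas : ∀ i, Measurable (ε i))
    (hindep : iIndepFun ε Q) (hid : ∀ i, IdentDistrib (ε i) (ε 0) Q Q) (k : ℕ) :
    Q {ω | visitTime ε lo hi (k + 1) ω < Vneg ε ω}
      ≤ Q {ω | 0 ≤ ε 0 ω} * Q {ω | -hi ≤ ε 0 ω} ^ k := by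
  induction k with
  | zero => simpa using measure_visitTime_one_lt_Vneg_le hid
  | succ k ih =>
    calc Q {ω | visitTime ε lo hi (k + 2) ω < Vneg ε ω}
        ≤ Q {ω | -hi ≤ ε 0 ω} * Q {ω | visitTime ε lo hi (k + 1) ω < Vneg ε ω} :=
          measure_visitTime_succ_succ_lt_Vneg_le hmeas hindep hid k
      _ ≤ Q {ω | -hi ≤ ε 0 ω} * (Q {ω | 0 ≤ ε 0 ω} * Q {ω | -hi ≤ ε 0 ω} ^ k) := by gcongr
      _ = Q {ω | 0 ≤ ε 0 ω} * Q {ω | -hi ≤ ε 0 ω} ^ (k + 1) := by ring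

end Probability

theorem stmt12_general {Ω : Type*} [MeasurableSpace Ω]
    (Q : Measure Ω) [IsProbabilityMeasure Q]
    (I : ℝ)
    (ε : ℕ → Ω → ℝ) (hmeas : ∀ i, Measurable (ε i))
    (hindep : iIndepFun ε Q)
    (hid : ∀ i, IdentDistrib (ε i) (ε 0) Q Q) :
    ∀ k : ℕ, 1 ≤ k →
      Q {ω | visitTime ε 0 (I / 4) k ω < Vneg ε ω}
        ≤ Q {ω | 0 ≤ ε 0 ω} * (1 - Q {ω | ε 0 ω < -(I / 4)}) ^ (k - 1) := by
  rintro k hk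
  obtain ⟨k, rfl⟩ := Nat.exists_eq_add_of_le' hk
  have hcompl : Q {ω | -(I / 4) ≤ ε 0 ω} = 1 - Q {ω | ε 0 ω < -(I / 4)} := by
    simpa only [Set.compl_ofPred, not_lt] using
      prob_compl_eq_one_sub (measurableSet_lt (hmeas 0) measurable_const)
  simpa [hcompl] using measure_visitTime_lt_Vneg_le (lo := 0) (hi := I / 4) hmeas hindep hid k

theorem stmt12 {Ω : Type*} [MeasurableSpace Ω]
    (Q : Measure Ω) [IsProbabilityMeasure Q]
    (η₀ : ℝ) (hη : η₀ ∈ Set.Ioo (0 : ℝ) (1 / 2))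
    (I : ℝ) (hIdef : I = Real.log ((1 - η₀) / η₀))
    (ε : ℕ → Ω → ℝ) (hmeas : ∀ i, Measurable (ε i))
    (hindep : iIndepFun ε Q)
    (hid : ∀ i, IdentDistrib (ε i) (ε 0) Q Q)
    (σ2 : ℝ) (hσ : 0 < σ2)
    (hmean : ∫ ω, ε 0 ω ∂Q = 0)
    (hvar : variance (ε 0) Q = σ2)
    (hbdd : ∀ᵐ ω ∂Q, |ε 0 ω| ≤ I)
    (hneg : 0 < Q {ω | ε 0 ω < -(I / 4)}) :
    ∀ k : ℕ, 1 ≤ k →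
      Q {ω | visitTime ε 0 (I / 4) k ω < Vneg ε ω}
        ≤ Q {ω | 0 ≤ ε 0 ω} * (1 - Q {ω | ε 0 ω < -(I / 4)}) ^ (k - 1) :=
  stmt12_general Q I ε hmeas hindep hid
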